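/- arXiv:2305.16446 — 2 statements merged into one kernel-verified Lean document; each statement's English description precedes it below -/
import Mathlib

section
/- Let ρ and σ be n×n real symmetric positive semidefinite matrices with trace 1. Then the quantum Jensen–Shannon divergence is bounded below by one eighth of the squared Frobenius (Hilbert–Schmidt) norm of their difference: S((ρ+σ)/2) − (1/2)(S(ρ) + S(σ)) ≥ (1/8)·∑_{i,j} (ρᵢⱼ − σᵢⱼ)². -/
/-!
Put `m = (ρ + σ) / 2` and `D(A‖B) = Tr A log A - Tr A log B`. Then
`S(m) - (S(ρ) + S(σ)) / 2 = (D(ρ‖m) + D(σ‖m)) / 2`, and Klein's inequality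
`D(A‖B) ≥ ‖A - B‖² / 2` (Frobenius norm) applies to both terms, with
`‖ρ - m‖ = ‖σ - m‖ = ‖ρ - σ‖ / 2`.

Klein's inequality is reduced to scalars: if `u`, `v` are eigenbases of `A`, `B` with eigenvalues
`a`, `b` and `Pᵢⱼ = ⟨uᵢ, vⱼ⟩²`, every trace `Tr f(A) g(B)` equals `∑ᵢⱼ Pᵢⱼ f(aᵢ) g(bⱼ)`, so
`D(A‖B) - ‖A - B‖² / 2 = ∑ᵢⱼ Pᵢⱼ (aᵢ log (aᵢ / bⱼ) - aᵢ + bⱼ - (aᵢ - bⱼ)² / 2)` when `Tr A = Tr B`.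
Each bracket is nonnegative for eigenvalues in `[0, 1]`; the case `bⱼ = 0 < aᵢ` is excluded by
`ker B ⊆ ker A`, which holds for `B = m`.
-/

open Matrix

/-- The von Neumann entropy `S(M) = -∑ᵢ λᵢ log λᵢ` of a Hermitian (symmetric) real matrix,
defined as `0` on non-Hermitian matrices. -/
noncomputable def vonNeumannEntropy {n : Type*} [Fintype n] [DecidableEq n]
    (M : Matrix n n ℝ) : ℝ :=
  if hM : M.IsHermitian then -∑ i, hM.eigenvalues i * Real.log (hM.eigenvalues i) else 0

namespace Real

theorem log_le_sub_one_sub_sq_div_two {x : ℝ} (hx : 0 < x) (hx1 : x ≤ 1) :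
    log x ≤ x - 1 - (x - 1) ^ 2 / 2 := by
  have hu : |1 - x| < 1 := by rw [abs_lt]; constructor <;> linarith
  have hsum := hasSum_pow_div_log_of_abs_lt_one hu
  rw [sub_sub_cancel] at hsum
  have := sum_le_hasSum (Finset.range 2) (fun n _ => by positivity) hsum
  norm_num [Finset.sum_range_succ] at this
  nlinarith

theorem log_le_sub_inv_div_two {x : ℝ} (hx : 1 ≤ x) : log x ≤ (x - x⁻¹) / 2 := by
  rw [← sinh_log (by linarith)]
  exact self_le_sinh_iff.2 (log_nonneg hx)

theorem sq_sub_div_two_le_mul_log_sub_add {a b : ℝ} (ha : 0 ≤ a) (ha1 : a ≤ 1) (hb : 0 ≤ b)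
    (hb1 : b ≤ 1) (hab : b = 0 → a = 0) :
    (a - b) ^ 2 / 2 ≤ a * (log a - log b) - a + b := by
  rcases hb.eq_or_lt with rfl | hb
  · simp [hab rfl]
  rcases ha.eq_or_lt with rfl | ha
  · nlinarith
  have hlog : log a - log b = -log (b / a) := by rw [log_div hb.ne' ha.ne']; ring
  rw [hlog]
  rcases le_or_gt b a with hba | hab
  · have h := log_le_sub_one_sub_sq_div_two (div_pos hb ha) ((div_le_one ha).2 hba)
    have key : a * log (b / a) ≤ b - a - (b - a) ^ 2 / (2 * a) := by
      calc a * log (b / a) ≤ a * (b / a - 1 - (b / a - 1) ^ 2 / 2) := by gcongr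
        _ = b - a - (b - a) ^ 2 / (2 * a) := by field_simp
    have : (b - a) ^ 2 / 2 ≤ (b - a) ^ 2 / (2 * a) := by gcongr; linarith
    nlinarith
  · have h := log_le_sub_inv_div_two ((one_le_div ha).2 hab.le)
    have key : a * log (b / a) ≤ b - a - (b - a) ^ 2 / (2 * b) := by
      calc a * log (b / a) ≤ a * ((b / a - (b / a)⁻¹) / 2) := by gcongr
        _ = b - a - (b - a) ^ 2 / (2 * b) := by field_simp; ring
    have : (b - a) ^ 2 / 2 ≤ (b - a) ^ 2 / (2 * b) := by gcongr; linarith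
    nlinarith

end Real

namespace Matrix

variable {ι : Type*} [Fintype ι]

theorem IsHermitian.trace_mul_self {X : Matrix ι ι ℝ} (hX : X.IsHermitian) :
    (X * X).trace = ∑ i, ∑ j, X i j ^ 2 := by
  refine Finset.sum_congr rfl fun i _ => Finset.sum_congr rfl fun j _ => ?_
  change X i j * X j i = X i j ^ 2
  rw [← hX.apply j i, star_trivial, sq]

theorem PosSemidef.mulVec_eq_zero_of_add_mulVec_eq_zero {A B : Matrix ι ι ℝ}
    (hA : A.PosSemidef) (hB : B.PosSemidef) {v : ι → ℝ} (hv : (A + B) *ᵥ v = 0) :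
    A *ᵥ v = 0 := by
  refine (hA.dotProduct_mulVec_zero_iff v).1 (le_antisymm ?_ (hA.dotProduct_mulVec_nonneg v))
  have hsum : star v ⬝ᵥ A *ᵥ v + star v ⬝ᵥ B *ᵥ v = 0 := by
    rw [← dotProduct_add, ← add_mulVec, hv, dotProduct_zero]
  linarith [hB.dotProduct_mulVec_nonneg v]

variable [DecidableEq ι]

theorem star_mul_mul_diagonal_mul_star_mul_apply_self (U V : Matrix ι ι ℝ) (a : ι → ℝ)
    (j : ι) :
    (star V * (U * diagonal a * star U) * V) j j = ∑ i, (star U * V) i j ^ 2 * a i := by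
  have hconj : star V * (U * diagonal a * star U) * V =
      star (star U * V) * (diagonal a * (star U * V)) := by
    simp only [star_mul, star_star, Matrix.mul_assoc]
  rw [hconj, mul_apply]
  refine Finset.sum_congr rfl fun i _ => ?_
  rw [diagonal_mul, star_apply, star_trivial]
  ring

theorem trace_mul_mul_diagonal_mul_star (X V : Matrix ι ι ℝ) (b : ι → ℝ) :
    (X * (V * diagonal b * star V)).trace = ∑ j, (star V * X * V) j j * b j := by
  rw [← Matrix.mul_assoc, ← Matrix.mul_assoc, trace_mul_comm, ← Matrix.mul_assoc,
    ← Matrix.mul_assoc]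
  simp only [trace, diag, mul_diagonal]

variable {A B : Matrix ι ι ℝ}

/-- Umegaki's relative entropy. Since `Real.log 0 = 0`, its value is junk unless
`ker B ⊆ ker A`. -/
noncomputable def relativeEntropy (A B : Matrix ι ι ℝ) : ℝ :=
  (A * cfc Real.log A).trace - (A * cfc Real.log B).trace

namespace IsHermitian

theorem cfc_eq_mul_diagonal_mul (hA : A.IsHermitian) (f : ℝ → ℝ) :
    cfc f A = hA.eigenvectorUnitary * diagonal (f ∘ hA.eigenvalues) *
      star (hA.eigenvectorUnitary : Matrix ι ι ℝ) := by
  rw [hA.cfc_eq, IsHermitian.cfc, Unitary.conjStarAlgAut_apply, RCLike.ofReal_real_eq_id,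
    Function.id_comp]

theorem eq_mul_diagonal_mul (hA : A.IsHermitian) :
    A = hA.eigenvectorUnitary * diagonal hA.eigenvalues *
      star (hA.eigenvectorUnitary : Matrix ι ι ℝ) := by
  conv_lhs => rw [← cfc_id' ℝ A hA.isSelfAdjoint, hA.cfc_eq_mul_diagonal_mul]
  rfl

theorem trace_cfc (hA : A.IsHermitian) (f : ℝ → ℝ) :
    (cfc f A).trace = ∑ i, f (hA.eigenvalues i) := by
  rw [hA.cfc_eq_mul_diagonal_mul, Matrix.mul_assoc, trace_mul_comm, Matrix.mul_assoc,
    Unitary.coe_star_mul_self, Matrix.mul_one, trace_diagonal]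
  rfl

theorem mul_cfc (hA : A.IsHermitian) (f : ℝ → ℝ) : A * cfc f A = cfc (fun x => x * f x) A := by
  rw [cfc_mul _ _ A (A.finite_spectrum.continuousOn _) (A.finite_spectrum.continuousOn _),
    cfc_id' ℝ A hA.isSelfAdjoint]

noncomputable def eigenOverlap (hA : A.IsHermitian) (hB : B.IsHermitian) (i j : ι) : ℝ :=
  (star (hA.eigenvectorUnitary : Matrix ι ι ℝ) * hB.eigenvectorUnitary) i j ^ 2

theorem star_eigenvectorUnitary_mul_mul_apply_self (hA : A.IsHermitian) (hB : B.IsHermitian)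
    (j : ι) :
    (star (hB.eigenvectorUnitary : Matrix ι ι ℝ) * A * hB.eigenvectorUnitary) j j =
      ∑ i, hA.eigenOverlap hB i j * hA.eigenvalues i := by
  conv_lhs => rw [hA.eq_mul_diagonal_mul]
  exact star_mul_mul_diagonal_mul_star_mul_apply_self _ _ _ _

theorem trace_cfc_mul_cfc (hA : A.IsHermitian) (hB : B.IsHermitian) (f g : ℝ → ℝ) :
    (cfc f A * cfc g B).trace =
      ∑ i, ∑ j, hA.eigenOverlap hB i j * f (hA.eigenvalues i) * g (hB.eigenvalues j) := by
  rw [hB.cfc_eq_mul_diagonal_mul, trace_mul_mul_diagonal_mul_star, hA.cfc_eq_mul_diagonal_mul,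
    Finset.sum_comm]
  simp only [star_mul_mul_diagonal_mul_star_mul_apply_self, Finset.sum_mul]
  rfl

theorem vonNeumannEntropy_eq_neg_trace_mul_cfc_log (hA : A.IsHermitian) :
    vonNeumannEntropy A = -(A * cfc Real.log A).trace := by
  rw [vonNeumannEntropy, dif_pos hA, hA.mul_cfc, hA.trace_cfc]

theorem trace_sub_trace_eq_sum_eigenOverlap (hA : A.IsHermitian) (hB : B.IsHermitian) :
    A.trace - B.trace =
      ∑ i, ∑ j, hA.eigenOverlap hB i j * (hA.eigenvalues i - hB.eigenvalues j) := by
  have hA' : A.trace = (cfc (fun x : ℝ => x) A * cfc (fun _ : ℝ => 1) B).trace := by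
    rw [cfc_id' ℝ A hA.isSelfAdjoint, cfc_const_one ℝ B hB.isSelfAdjoint, mul_one]
  have hB' : B.trace = (cfc (fun _ : ℝ => 1) A * cfc (fun x : ℝ => x) B).trace := by
    rw [cfc_id' ℝ B hB.isSelfAdjoint, cfc_const_one ℝ A hA.isSelfAdjoint, one_mul]
  simp only [hA', hB', hA.trace_cfc_mul_cfc hB, ← Finset.sum_sub_distrib]
  exact Finset.sum_congr rfl fun i _ => Finset.sum_congr rfl fun j _ => by ring

theorem relativeEntropy_eq_sum_eigenOverlap (hA : A.IsHermitian) (hB : B.IsHermitian) :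
    relativeEntropy A B = ∑ i, ∑ j, hA.eigenOverlap hB i j *
      (hA.eigenvalues i * (Real.log (hA.eigenvalues i) - Real.log (hB.eigenvalues j))) := by
  have hAA : A * cfc Real.log A =
      cfc (fun x : ℝ => x * Real.log x) A * cfc (fun _ : ℝ => 1) B := by
    rw [cfc_const_one ℝ B hB.isSelfAdjoint, mul_one, hA.mul_cfc]
  have hAB : A * cfc Real.log B = cfc (fun x : ℝ => x) A * cfc Real.log B := by
    rw [cfc_id' ℝ A hA.isSelfAdjoint]
  simp only [relativeEntropy, hAA, hAB, hA.trace_cfc_mul_cfc hB, ← Finset.sum_sub_distrib]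
  exact Finset.sum_congr rfl fun i _ => Finset.sum_congr rfl fun j _ => by ring

theorem sum_sq_sub_eq_sum_eigenOverlap (hA : A.IsHermitian) (hB : B.IsHermitian) :
    ∑ i, ∑ j, (A i j - B i j) ^ 2 =
      ∑ i, ∑ j, hA.eigenOverlap hB i j * (hA.eigenvalues i - hB.eigenvalues j) ^ 2 := by
  have hAA : A * A = cfc (fun x : ℝ => x * x) A * cfc (fun _ : ℝ => 1) B := by
    rw [cfc_const_one ℝ B hB.isSelfAdjoint, mul_one, ← hA.mul_cfc,
      cfc_id' ℝ A hA.isSelfAdjoint]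
  have hAB : A * B = cfc (fun x : ℝ => x) A * cfc (fun x : ℝ => x) B := by
    rw [cfc_id' ℝ A hA.isSelfAdjoint, cfc_id' ℝ B hB.isSelfAdjoint]
  have hBB : B * B = cfc (fun _ : ℝ => 1) A * cfc (fun x : ℝ => x * x) B := by
    rw [cfc_const_one ℝ A hA.isSelfAdjoint, one_mul, ← hB.mul_cfc,
      cfc_id' ℝ B hB.isSelfAdjoint]
  have hfrob := (hA.sub hB).trace_mul_self
  simp only [sub_apply] at hfrob
  rw [← hfrob, sub_mul, mul_sub, mul_sub, trace_sub, trace_sub, trace_sub, trace_mul_comm B A,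
    hAA, hAB, hBB]
  simp only [hA.trace_cfc_mul_cfc hB, ← Finset.sum_sub_distrib]
  exact Finset.sum_congr rfl fun i _ => Finset.sum_congr rfl fun j _ => by ring

theorem vonNeumannEntropy_midpoint_sub (hA : A.IsHermitian) (hB : B.IsHermitian) :
    vonNeumannEntropy ((1 / 2 : ℝ) • (A + B))
        - 1 / 2 * (vonNeumannEntropy A + vonNeumannEntropy B) =
      1 / 2 * (relativeEntropy A ((1 / 2 : ℝ) • (A + B))
        + relativeEntropy B ((1 / 2 : ℝ) • (A + B))) := by
  set M := (1 / 2 : ℝ) • (A + B) with hM_def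
  have hM : M.IsHermitian := (hA.add hB).smul (IsSelfAdjoint.all _)
  have hlin : (A * cfc Real.log M).trace + (B * cfc Real.log M).trace =
      2 * (M * cfc Real.log M).trace := by
    rw [← trace_add, ← add_mul, hM_def, smul_mul, trace_smul, smul_eq_mul]
    ring
  rw [hM.vonNeumannEntropy_eq_neg_trace_mul_cfc_log,
    hA.vonNeumannEntropy_eq_neg_trace_mul_cfc_log, hB.vonNeumannEntropy_eq_neg_trace_mul_cfc_log,
    relativeEntropy, relativeEntropy]
  linarith

end IsHermitian

namespace PosSemidef

theorem eigenvalues_le_trace (hA : A.PosSemidef) (i : ι) : hA.1.eigenvalues i ≤ A.trace := by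
  rw [hA.1.trace_eq_sum_eigenvalues]
  exact Finset.single_le_sum (fun j _ => hA.eigenvalues_nonneg j) (Finset.mem_univ i)

theorem eigenOverlap_mul_eigenvalues_eq_zero (hA : A.PosSemidef) (hB : B.IsHermitian)
    (hker : ∀ v, B *ᵥ v = 0 → A *ᵥ v = 0) {j : ι} (hj : hB.eigenvalues j = 0) (i : ι) :
    hA.1.eigenOverlap hB i j * hA.1.eigenvalues i = 0 := by
  set V : Matrix ι ι ℝ := (hB.eigenvectorUnitary : Matrix ι ι ℝ)
  have hAv : A *ᵥ V.col j = 0 := hker _ <| by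
    rw [hB.eigenvectorUnitary_col_eq, hB.mulVec_eigenvectorBasis, hj, zero_smul]
  have hAV : ∀ k, (A * V) k j = 0 := congrFun hAv
  have hdiag : ∑ i, hA.1.eigenOverlap hB i j * hA.1.eigenvalues i = 0 := by
    rw [← hA.1.star_eigenvectorUnitary_mul_mul_apply_self hB, Matrix.mul_assoc, mul_apply]
    exact Finset.sum_eq_zero fun k _ => by rw [hAV, mul_zero]
  refine (Finset.sum_eq_zero_iff_of_nonneg (fun k _ => ?_)).1 hdiag i (Finset.mem_univ i)
  exact mul_nonneg (sq_nonneg _) (hA.eigenvalues_nonneg k)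

theorem half_sum_sq_sub_le_relativeEntropy (hA : A.PosSemidef) (hB : B.PosSemidef)
    (hA1 : ∀ i, hA.1.eigenvalues i ≤ 1) (hB1 : ∀ j, hB.1.eigenvalues j ≤ 1)
    (htr : A.trace = B.trace) (hker : ∀ v, B *ᵥ v = 0 → A *ᵥ v = 0) :
    1 / 2 * ∑ i, ∑ j, (A i j - B i j) ^ 2 ≤ relativeEntropy A B := by
  set α := hA.1.eigenvalues
  set β := hB.1.eigenvalues
  set P := hA.1.eigenOverlap hB.1
  have hterm : ∀ i j, 1 / 2 * (P i j * (α i - β j) ^ 2) + P i j * (α i - β j) ≤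
      P i j * (α i * (Real.log (α i) - Real.log (β j))) := by
    intro i j
    by_cases hP : P i j = 0
    · simp [hP]
    have hab : β j = 0 → α i = 0 := fun hj =>
      (mul_eq_zero.1 (hA.eigenOverlap_mul_eigenvalues_eq_zero hB.1 hker hj i)).resolve_left hP
    have h : (α i - β j) ^ 2 / 2 ≤ α i * (Real.log (α i) - Real.log (β j)) - α i + β j :=
      Real.sq_sub_div_two_le_mul_log_sub_add (hA.eigenvalues_nonneg i) (hA1 i)
        (hB.eigenvalues_nonneg j) (hB1 j) hab
    have hP0 : 0 ≤ P i j := sq_nonneg _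
    nlinarith [mul_le_mul_of_nonneg_left h hP0]
  have hsum := Finset.sum_le_sum fun i (_ : i ∈ Finset.univ) =>
    Finset.sum_le_sum fun j (_ : j ∈ Finset.univ) => hterm i j
  simp only [Finset.sum_add_distrib, ← Finset.mul_sum] at hsum
  rwa [← hA.1.trace_sub_trace_eq_sum_eigenOverlap hB.1, htr, sub_self, add_zero,
    ← hA.1.relativeEntropy_eq_sum_eigenOverlap hB.1,
    ← hA.1.sum_sq_sub_eq_sum_eigenOverlap hB.1] at hsum

theorem sum_sq_sub_div_eight_le_relativeEntropy_midpoint (hA : A.PosSemidef) (hB : B.PosSemidef)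
    (hA1 : A.trace = 1) (hB1 : B.trace = 1) :
    (∑ i, ∑ j, (A i j - B i j) ^ 2) / 8 ≤ relativeEntropy A ((1 / 2 : ℝ) • (A + B)) := by
  set M := (1 / 2 : ℝ) • (A + B) with hM_def
  have hM : M.PosSemidef := (hA.add hB).smul (by norm_num)
  have hM1 : M.trace = 1 := by
    rw [hM_def, trace_smul, trace_add, hA1, hB1, smul_eq_mul]
    norm_num
  have hker : ∀ v, M *ᵥ v = 0 → A *ᵥ v = 0 := fun v hv => by
    rw [hM_def, smul_mulVec, smul_eq_zero_iff_right (by norm_num)] at hv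
    exact hA.mulVec_eq_zero_of_add_mulVec_eq_zero hB hv
  have hdist : ∑ i, ∑ j, (A i j - M i j) ^ 2 = 1 / 4 * ∑ i, ∑ j, (A i j - B i j) ^ 2 := by
    simp only [hM_def, Matrix.smul_apply, Matrix.add_apply, smul_eq_mul, Finset.mul_sum]
    exact Finset.sum_congr rfl fun i _ => Finset.sum_congr rfl fun j _ => by ring
  have hklein := hA.half_sum_sq_sub_le_relativeEntropy hM
    (fun i => (hA.eigenvalues_le_trace i).trans_eq hA1)
    (fun j => (hM.eigenvalues_le_trace j).trans_eq hM1) (hA1.trans hM1.symm) hker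
  linarith

end PosSemidef

end Matrix

/-- The quantum Jensen-Shannon divergence is bounded below by one eighth of the squared
Frobenius (Hilbert-Schmidt) norm of the difference of the density matrices. -/
theorem qjsd_ge_frobenius_sq {n : ℕ} {ρ σ : Matrix (Fin n) (Fin n) ℝ}
    (hρ : ρ.PosSemidef) (hσ : σ.PosSemidef) (hρ1 : ρ.trace = 1) (hσ1 : σ.trace = 1) :
    vonNeumannEntropy ((1 / 2 : ℝ) • (ρ + σ))
        - (1 / 2) * (vonNeumannEntropy ρ + vonNeumannEntropy σ) ≥
      (1 / 8) * ∑ i, ∑ j, (ρ i j - σ i j) ^ 2 := by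
  have hρm := hρ.sum_sq_sub_div_eight_le_relativeEntropy_midpoint hσ hρ1 hσ1
  have hσm := hσ.sum_sq_sub_div_eight_le_relativeEntropy_midpoint hρ hσ1 hρ1
  simp only [add_comm σ ρ, sub_sq_comm (σ _ _)] at hσm
  rw [hρ.1.vonNeumannEntropy_midpoint_sub hσ.1]
  linarith
end

section
/- Let N, M ≥ 1 be natural numbers, let π₁ = N/(N+M) and π₂ = M/(N+M), and let ρ and σ be n×n real symmetric positive semidefinite matrices with trace 1. Then the weighted representation Jensen–Shannon divergence is bounded: S(π₁·ρ + π₂·σ) − (π₁·S(ρ) + π₂·S(σ)) ≤ log((N+M)/√(N·M)). -/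
/-!
Let `τ = p • ρ + q • σ` with `p = N/(N+M)`, `q = M/(N+M)`, let `v j` be an orthonormal eigenbasis
of `τ` and `a k`, `b l` the eigenvalues of `ρ`, `σ`. The vectors `g j = (√(p ρ) v j, √(q σ) v j)`
are pairwise orthogonal with `‖g j‖² = λ j(τ)`, and in the eigenbases of `ρ` and `σ` the squared
entries of the coordinate matrix of `(g j)` have row sums `p a k` and `q b l`. Dividing column `j`
by `‖g j‖²` gives a doubly substochastic matrix (Parseval and Bessel), so concavity of
`x ↦ -x log x` yields `S(τ) ≤ H(p, q) + p S(ρ) + q S(σ)`. Finally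
`H(p, q) ≤ log ((N + M) / √(N M))` is Chebyshev's inequality `(N - M) (log N - log M) ≥ 0`.
-/

open Matrix

open Real Finset
open scoped RealInnerProductSpace

theorem ConcaveOn.sum_mul_le_of_sum_le_one {ι : Type*} {f : ℝ → ℝ}
    (hf : ConcaveOn ℝ (Set.Ici 0) f) (hf0 : 0 ≤ f 0) {t : Finset ι} {w p : ι → ℝ}
    (hw : ∀ i ∈ t, 0 ≤ w i) (hw1 : ∑ i ∈ t, w i ≤ 1) (hp : ∀ i ∈ t, 0 ≤ p i) :
    ∑ i ∈ t, w i * f (p i) ≤ f (∑ i ∈ t, w i * p i) := by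
  have h := hf.map_add_sum_le hw (v := 1 - ∑ i ∈ t, w i) (by ring) hp (by linarith)
    Set.self_mem_Ici
  simp only [smul_eq_mul, mul_zero, zero_add] at h
  nlinarith [mul_nonneg (sub_nonneg.2 hw1) hf0]

section InnerProductSpace

variable {E ι : Type*} [NormedAddCommGroup E] [InnerProductSpace ℝ E] [Fintype ι]

theorem sum_inner_sq_div_norm_sq_le {g : ι → E} (hg : Pairwise fun i j => ⟪g i, g j⟫ = 0)
    (x : E) : ∑ i, ⟪g i, x⟫ ^ 2 / ‖g i‖ ^ 2 ≤ ‖x‖ ^ 2 := by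
  classical
  let e : {i // g i ≠ 0} → E := fun i => ‖g i‖⁻¹ • g i
  have he : Orthonormal ℝ e := by
    refine ⟨fun i => by simp [e, norm_smul, i.2], fun i j hij => ?_⟩
    simp [e, real_inner_smul_left, real_inner_smul_right, hg (Subtype.coe_ne_coe.2 hij)]
  calc ∑ i, ⟪g i, x⟫ ^ 2 / ‖g i‖ ^ 2 = ∑ i with g i ≠ 0, ⟪g i, x⟫ ^ 2 / ‖g i‖ ^ 2 :=
        (sum_filter_of_ne (by aesop)).symm
    _ = ∑ i : {i // g i ≠ 0}, ⟪g i, x⟫ ^ 2 / ‖g i‖ ^ 2 := sum_subtype _ (by simp) _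
    _ = ∑ i : {i // g i ≠ 0}, ‖⟪e i, x⟫‖ ^ 2 := by
        simp [e, real_inner_smul_left, mul_pow, div_eq_inv_mul]
    _ ≤ ‖x‖ ^ 2 := he.sum_inner_products_le x

theorem sum_negMulLog_norm_sq_le {κ : Type*} [Fintype κ] (w : OrthonormalBasis κ ℝ E)
    {g : ι → E} (hg : Pairwise fun i j => ⟪g i, g j⟫ = 0) :
    ∑ i, negMulLog (‖g i‖ ^ 2) ≤ ∑ k, negMulLog (∑ i, ⟪w k, g i⟫ ^ 2) := by
  set t : κ → ι → ℝ := fun k i => ⟪w k, g i⟫ ^ 2 / ‖g i‖ ^ 2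
  have ht_mul (k : κ) (i : ι) : t k i * ‖g i‖ ^ 2 = ⟪w k, g i⟫ ^ 2 := by
    rcases eq_or_ne (g i) 0 with h | h
    · simp [t, h]
    · exact div_mul_cancel₀ _ (by positivity)
  have hcol (i : ι) (hi : g i ≠ 0) : ∑ k, t k i = 1 := by
    rw [← sum_div, w.sum_sq_inner_right, div_self (by positivity)]
  have hrow (k : κ) : ∑ i, t k i ≤ 1 := by
    simpa [t, real_inner_comm] using sum_inner_sq_div_norm_sq_le hg (w k)
  calc ∑ i, negMulLog (‖g i‖ ^ 2) = ∑ i, (∑ k, t k i) * negMulLog (‖g i‖ ^ 2) := by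
        refine sum_congr rfl fun i _ => ?_
        rcases eq_or_ne (g i) 0 with h | h
        · simp [h]
        · rw [hcol i h, one_mul]
    _ = ∑ k, ∑ i, t k i * negMulLog (‖g i‖ ^ 2) := by
        simp_rw [sum_mul]
        exact sum_comm
    _ ≤ ∑ k, negMulLog (∑ i, t k i * ‖g i‖ ^ 2) := sum_le_sum fun k _ =>
        concaveOn_negMulLog.sum_mul_le_of_sum_le_one negMulLog_zero.ge
          (fun i _ => by positivity) (hrow k) (fun i _ => by positivity)
    _ = ∑ k, negMulLog (∑ i, ⟪w k, g i⟫ ^ 2) := by simp_rw [ht_mul]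

end InnerProductSpace

variable {m : Type*} [Fintype m] [DecidableEq m]

namespace Matrix.IsHermitian

variable {A : Matrix m m ℝ} (hA : A.IsHermitian)

theorem toEuclideanLin_eigenvectorBasis (k : m) :
    toEuclideanLin A (hA.eigenvectorBasis k) = hA.eigenvalues k • hA.eigenvectorBasis k := by
  rw [toLpLin_apply, hA.mulVec_eigenvectorBasis]
  rfl

theorem inner_toEuclideanLin_eq_sum (y y' : EuclideanSpace ℝ m) :
    ⟪y, toEuclideanLin A y'⟫ = ∑ k, hA.eigenvalues k *
      (⟪hA.eigenvectorBasis k, y⟫ * ⟪hA.eigenvectorBasis k, y'⟫) := by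
  rw [← hA.eigenvectorBasis.sum_inner_mul_inner]
  refine sum_congr rfl fun k _ => ?_
  rw [← isSymmetric_toEuclideanLin_iff.mpr hA, hA.toEuclideanLin_eigenvectorBasis,
    real_inner_smul_left, real_inner_comm]
  ring

end Matrix.IsHermitian

namespace Matrix.PosSemidef

/-- The coordinates of `√(p • A) y` in the eigenbasis of `A`. -/
noncomputable def sqrtSmulCoords {A : Matrix m m ℝ} (hA : A.PosSemidef) (p : ℝ)
    (y : EuclideanSpace ℝ m) : m → ℝ :=
  fun k => √(p * hA.1.eigenvalues k) * ⟪hA.1.eigenvectorBasis k, y⟫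

section

variable {A : Matrix m m ℝ} {hA : A.PosSemidef} {p : ℝ}

theorem sum_sqrtSmulCoords_mul (hp : 0 ≤ p) (y y' : EuclideanSpace ℝ m) :
    ∑ k, hA.sqrtSmulCoords p y k * hA.sqrtSmulCoords p y' k =
      p * ⟪y, toEuclideanLin A y'⟫ := by
  rw [hA.1.inner_toEuclideanLin_eq_sum, mul_sum]
  refine sum_congr rfl fun k _ => ?_
  have hsqrt := Real.mul_self_sqrt (mul_nonneg hp (hA.eigenvalues_nonneg k))
  simp only [sqrtSmulCoords]
  linear_combination (⟪hA.1.eigenvectorBasis k, y⟫ * ⟪hA.1.eigenvectorBasis k, y'⟫) * hsqrt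

theorem sum_sqrtSmulCoords_sq (hp : 0 ≤ p) (v : OrthonormalBasis m ℝ (EuclideanSpace ℝ m))
    (k : m) : ∑ j, hA.sqrtSmulCoords p (v j) k ^ 2 = p * hA.1.eigenvalues k := by
  simp only [sqrtSmulCoords, mul_pow, ← mul_sum, v.sum_sq_inner_left,
    hA.1.eigenvectorBasis.orthonormal.1 k, Real.sq_sqrt (mul_nonneg hp (hA.eigenvalues_nonneg k))]
  ring

end

theorem sum_negMulLog_eigenvalues_smul_add_smul_le {ρ σ : Matrix m m ℝ} (hρ : ρ.PosSemidef)
    (hσ : σ.PosSemidef) {p q : ℝ} (hp : 0 ≤ p) (hq : 0 ≤ q) (hτ : (p • ρ + q • σ).IsHermitian) :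
    ∑ j, negMulLog (hτ.eigenvalues j) ≤
      ∑ k, negMulLog (p * hρ.1.eigenvalues k) + ∑ k, negMulLog (q * hσ.1.eigenvalues k) := by
  set v := hτ.eigenvectorBasis
  let g : m → EuclideanSpace ℝ (m ⊕ m) := fun j =>
    WithLp.toLp 2 (Sum.elim (hρ.sqrtSmulCoords p (v j)) (hσ.sqrtSmulCoords q (v j)))
  have hgram (i j : m) : ⟪g i, g j⟫ = hτ.eigenvalues j * ⟪v i, v j⟫ := by
    calc ⟪g i, g j⟫
        = p * ⟪v i, toEuclideanLin ρ (v j)⟫ + q * ⟪v i, toEuclideanLin σ (v j)⟫ := by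
          simp [g, PiLp.inner_apply, Fintype.sum_sum_type, mul_comm, sum_sqrtSmulCoords_mul, hp, hq]
      _ = ⟪v i, toEuclideanLin (p • ρ + q • σ) (v j)⟫ := by
          simp [inner_add_right, real_inner_smul_right]
      _ = hτ.eigenvalues j * ⟪v i, v j⟫ := by
          rw [hτ.toEuclideanLin_eigenvectorBasis, real_inner_smul_right]
  have horth : Pairwise fun i j => ⟪g i, g j⟫ = 0 := fun i j hij => by
    simp [hgram, v.orthonormal.2 hij]
  have hnorm (j : m) : ‖g j‖ ^ 2 = hτ.eigenvalues j := by
    rw [← real_inner_self_eq_norm_sq, hgram, real_inner_self_eq_norm_sq, v.orthonormal.1 j]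
    simp
  have hmajor := sum_negMulLog_norm_sq_le (EuclideanSpace.basisFun (m ⊕ m) ℝ) horth
  simp only [EuclideanSpace.basisFun_inner] at hmajor
  simpa [hnorm, g, Fintype.sum_sum_type, sum_sqrtSmulCoords_sq, hp, hq] using hmajor

end Matrix.PosSemidef

theorem sum_negMulLog_const_mul {ι : Type*} (s : Finset ι) (c : ℝ) (a : ι → ℝ) :
    ∑ i ∈ s, negMulLog (c * a i) =
      (∑ i ∈ s, a i) * negMulLog c + c * ∑ i ∈ s, negMulLog (a i) := by
  simp only [negMulLog_mul, sum_add_distrib, sum_mul, mul_sum]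

theorem vonNeumannEntropy_eq_sum_negMulLog {A : Matrix m m ℝ} (hA : A.IsHermitian) :
    vonNeumannEntropy A = ∑ i, negMulLog (hA.eigenvalues i) := by
  rw [vonNeumannEntropy, dif_pos hA, ← sum_neg_distrib]
  simp only [negMulLog, neg_mul]

theorem vonNeumannEntropy_smul_add_smul_le {ρ σ : Matrix m m ℝ} (hρ : ρ.PosSemidef)
    (hσ : σ.PosSemidef) {p q : ℝ} (hp : 0 ≤ p) (hq : 0 ≤ q) :
    vonNeumannEntropy (p • ρ + q • σ) ≤ p * vonNeumannEntropy ρ + q * vonNeumannEntropy σ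
      + ρ.trace * negMulLog p + σ.trace * negMulLog q := by
  have hτ : (p • ρ + q • σ).IsHermitian := ((hρ.smul hp).add (hσ.smul hq)).1
  have hspec := hρ.sum_negMulLog_eigenvalues_smul_add_smul_le hσ hp hq hτ
  rw [sum_negMulLog_const_mul, sum_negMulLog_const_mul] at hspec
  rw [vonNeumannEntropy_eq_sum_negMulLog hτ, vonNeumannEntropy_eq_sum_negMulLog hρ.1,
    vonNeumannEntropy_eq_sum_negMulLog hσ.1, hρ.1.trace_eq_sum_eigenvalues,
    hσ.1.trace_eq_sum_eigenvalues]
  simp only [RCLike.ofReal_real_eq_id, id]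
  linarith

theorem negMulLog_div_add_negMulLog_div_le {x y : ℝ} (hx : 0 < x) (hy : 0 < y) :
    negMulLog (x / (x + y)) + negMulLog (y / (x + y)) ≤ log ((x + y) / √(x * y)) := by
  have hs : 0 < x + y := by linarith
  have hgap : log ((x + y) / √(x * y)) - (negMulLog (x / (x + y)) + negMulLog (y / (x + y)))
      = (x - y) * (log x - log y) / (2 * (x + y)) := by
    rw [log_div hs.ne' (by positivity), log_sqrt (by positivity), log_mul hx.ne' hy.ne',
      negMulLog, negMulLog, log_div hx.ne' hs.ne', log_div hy.ne' hs.ne']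
    field_simp
    ring
  have hchebyshev : 0 ≤ (x - y) * (log x - log y) := by
    rcases le_total x y with h | h
    · exact mul_nonneg_of_nonpos_of_nonpos (by linarith) (by linarith [log_le_log hx h])
    · exact mul_nonneg (by linarith) (by linarith [log_le_log hy h])
  linarith [div_nonneg hchebyshev (by positivity : (0 : ℝ) ≤ 2 * (x + y))]

/-- Boundedness of the weighted representation Jensen-Shannon divergence:
`S(π₁ρ + π₂σ) - (π₁ S(ρ) + π₂ S(σ)) ≤ log((N+M)/√(NM))`. -/
theorem qjsd_le_log {N M : ℕ} (hN : 1 ≤ N) (hM : 1 ≤ M)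
    {n : ℕ} {ρ σ : Matrix (Fin n) (Fin n) ℝ}
    (hρ : ρ.PosSemidef) (hσ : σ.PosSemidef) (hρ1 : ρ.trace = 1) (hσ1 : σ.trace = 1) :
    vonNeumannEntropy (((N : ℝ) / (N + M)) • ρ + ((M : ℝ) / (N + M)) • σ)
        - (((N : ℝ) / (N + M)) * vonNeumannEntropy ρ
            + ((M : ℝ) / (N + M)) * vonNeumannEntropy σ) ≤
      Real.log ((N + M : ℝ) / Real.sqrt (N * M)) := by
  have hN0 : (0 : ℝ) < N := by exact_mod_cast hN
  have hM0 : (0 : ℝ) < M := by exact_mod_cast hM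
  have hmix := vonNeumannEntropy_smul_add_smul_le hρ hσ
    (by positivity : (0 : ℝ) ≤ N / (N + M)) (by positivity : (0 : ℝ) ≤ M / (N + M))
  rw [hρ1, hσ1] at hmix
  linarith [negMulLog_div_add_negMulLog_div_le hN0 hM0]
end
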